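/- Let ℏ, m > 0 and let j, k ∈ {1,2,3} with j ≠ k. Define the operator Q_{jk} on smooth functions φ : ℝ × ℝ³ → ℂ by (Q_{jk}φ)(t,x) = t ( x_j ∂_k φ(t,x) − x_k ∂_j φ(t,x) ). Then for every smooth φ, the second-order commutator with the free Schrödinger operator vanishes: [L_s,[L_s, Q_{jk}]]φ = 0. -/

import Mathlib

open Complex

/-- Partial derivative in the `i`-th coordinate direction on `ℝ⁴`. -/
noncomputable def pd (i : Fin 4) (f : (Fin 4 → ℝ) → ℂ) : (Fin 4 → ℝ) → ℂ :=
  fun x => fderiv ℝ f x (Pi.single i 1)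

/-- The free Schrödinger operator `L_s φ = iℏ ∂_t φ + (ℏ²/(2m)) Δφ`,
with time variable `x 0` and space variables `x 1, x 2, x 3`. -/
noncomputable def Ls (hbar m : ℝ) (f : (Fin 4 → ℝ) → ℂ) : (Fin 4 → ℝ) → ℂ :=
  fun x => Complex.I * (hbar : ℂ) * pd 0 f x +
    ((hbar ^ 2 / (2 * m) : ℝ) : ℂ) *
      (pd 1 (pd 1 f) x + pd 2 (pd 2 f) x + pd 3 (pd 3 f) x)

/-- The operator `Q_{jk} φ = t (x_j ∂_k φ − x_k ∂_j φ)` for space indices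
`j, k ∈ {1,2,3}` (here `j k : Fin 3`). -/
noncomputable def Qjk (j k : Fin 3) (f : (Fin 4 → ℝ) → ℂ) : (Fin 4 → ℝ) → ℂ :=
  fun x => (x 0 : ℂ) * ((x j.succ : ℂ) * pd k.succ f x - (x k.succ : ℂ) * pd j.succ f x)


lemma coord_contDiff (l : Fin 4) :
    ContDiff ℝ (⊤ : ℕ∞) (fun y : Fin 4 → ℝ => ((y l : ℝ) : ℂ)) :=
  Complex.ofRealCLM.contDiff.comp (contDiff_apply ℝ ℝ l)

lemma pd_contDiff {f : (Fin 4 → ℝ) → ℂ} (hf : ContDiff ℝ (⊤ : ℕ∞) f) (i : Fin 4) :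
    ContDiff ℝ (⊤ : ℕ∞) (pd i f) := by
  unfold pd
  exact (hf.fderiv_right (by simp)).clm_apply contDiff_const

lemma pd_add {f g : (Fin 4 → ℝ) → ℂ} {x : Fin 4 → ℝ} (hf : DifferentiableAt ℝ f x)
    (hg : DifferentiableAt ℝ g x) (i : Fin 4) :
    pd i (fun y => f y + g y) x = pd i f x + pd i g x := by
  simp [pd, fderiv_fun_add hf hg]

lemma pd_sub {f g : (Fin 4 → ℝ) → ℂ} {x : Fin 4 → ℝ} (hf : DifferentiableAt ℝ f x)
    (hg : DifferentiableAt ℝ g x) (i : Fin 4) :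
    pd i (fun y => f y - g y) x = pd i f x - pd i g x := by
  simp [pd, fderiv_fun_sub hf hg]

lemma pd_const_mul {f : (Fin 4 → ℝ) → ℂ} {x : Fin 4 → ℝ} (hf : DifferentiableAt ℝ f x)
    (c : ℂ) (i : Fin 4) :
    pd i (fun y => c * f y) x = c * pd i f x := by
  simp [pd, fderiv_const_mul hf]

lemma pd_coord_mul {g : (Fin 4 → ℝ) → ℂ} {x : Fin 4 → ℝ} (hg : DifferentiableAt ℝ g x)
    (l i : Fin 4) :
    pd i (fun y => ((y l : ℝ) : ℂ) * g y) x
      = (if l = i then 1 else 0) * g x + ((x l : ℝ) : ℂ) * pd i g x := by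
  have hc : HasFDerivAt (fun y : Fin 4 → ℝ => ((y l : ℝ) : ℂ))
      (Complex.ofRealCLM.comp (ContinuousLinearMap.proj l)) x := by
    have h := (Complex.ofRealCLM.comp
      (ContinuousLinearMap.proj (R := ℝ) (φ := fun _ : Fin 4 => ℝ) l)).hasFDerivAt (x := x)
    exact h
  have h := (hc.fun_mul hg.hasFDerivAt).fderiv
  simp only [pd, h, ContinuousLinearMap.add_apply, ContinuousLinearMap.smul_apply,
    ContinuousLinearMap.comp_apply, ContinuousLinearMap.proj_apply,
    Complex.ofRealCLM_apply, Pi.single_apply, smul_eq_mul]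
  split <;> simp <;> ring

lemma pd_comm {f : (Fin 4 → ℝ) → ℂ} (hf : ContDiff ℝ (⊤ : ℕ∞) f) (i j : Fin 4) (x : Fin 4 → ℝ) :
    pd i (pd j f) x = pd j (pd i f) x := by
  have hsymm : IsSymmSndFDerivAt ℝ f x := hf.contDiffAt.isSymmSndFDerivAt (by rw [minSmoothness_of_isRCLikeNormedField]; exact WithTop.coe_le_coe.mpr le_top)
  have hdf : DifferentiableAt ℝ (fderiv ℝ f) x :=
    ((hf.fderiv_right (m := 1) (WithTop.coe_le_coe.mpr le_top)).differentiable (by simp)) x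
  have key : ∀ v w : Fin 4 → ℝ,
      fderiv ℝ (fun y => fderiv ℝ f y v) x w = fderiv ℝ (fderiv ℝ f) x w v := by
    intro v w
    rw [fderiv_clm_apply hdf (differentiableAt_const v)]
    simp
  show fderiv ℝ (fun y => fderiv ℝ f y (Pi.single j 1)) x (Pi.single i 1)
      = fderiv ℝ (fun y => fderiv ℝ f y (Pi.single i 1)) x (Pi.single j 1)
  rw [key, key, hsymm]

/-- function-level versions -/
lemma pd_add' {f g : (Fin 4 → ℝ) → ℂ} (hf : ContDiff ℝ (⊤ : ℕ∞) f) (hg : ContDiff ℝ (⊤ : ℕ∞) g) (i : Fin 4) :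
    pd i (fun y => f y + g y) = fun x => pd i f x + pd i g x :=
  funext fun x => pd_add (hf.differentiable (by simp) x) (hg.differentiable (by simp) x) i

lemma pd_sub' {f g : (Fin 4 → ℝ) → ℂ} (hf : ContDiff ℝ (⊤ : ℕ∞) f) (hg : ContDiff ℝ (⊤ : ℕ∞) g) (i : Fin 4) :
    pd i (fun y => f y - g y) = fun x => pd i f x - pd i g x :=
  funext fun x => pd_sub (hf.differentiable (by simp) x) (hg.differentiable (by simp) x) i

lemma pd_const_mul' {f : (Fin 4 → ℝ) → ℂ} (hf : ContDiff ℝ (⊤ : ℕ∞) f) (c : ℂ) (i : Fin 4) :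
    pd i (fun y => c * f y) = fun x => c * pd i f x :=
  funext fun x => pd_const_mul (hf.differentiable (by simp) x) c i

lemma pd_coord_mul' {g : (Fin 4 → ℝ) → ℂ} (hg : ContDiff ℝ (⊤ : ℕ∞) g) (l i : Fin 4) :
    pd i (fun y => ((y l : ℝ) : ℂ) * g y)
      = fun x => (if l = i then 1 else 0) * g x + ((x l : ℝ) : ℂ) * pd i g x :=
  funext fun x => pd_coord_mul (hg.differentiable (by simp) x) l i

lemma pd_comm' {f : (Fin 4 → ℝ) → ℂ} (hf : ContDiff ℝ (⊤ : ℕ∞) f) (i j : Fin 4) :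
    pd i (pd j f) = pd j (pd i f) :=
  funext fun x => pd_comm hf i j x

lemma coord_mul_contDiff {g : (Fin 4 → ℝ) → ℂ} (hg : ContDiff ℝ (⊤ : ℕ∞) g) (l : Fin 4) :
    ContDiff ℝ (⊤ : ℕ∞) (fun y => ((y l : ℝ) : ℂ) * g y) :=
  (coord_contDiff l).mul hg

/-- The Laplacian in the space variables. -/
noncomputable def Lap (f : (Fin 4 → ℝ) → ℂ) : (Fin 4 → ℝ) → ℂ :=
  fun x => pd 1 (pd 1 f) x + pd 2 (pd 2 f) x + pd 3 (pd 3 f) x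

lemma Lap_contDiff {f : (Fin 4 → ℝ) → ℂ} (hf : ContDiff ℝ (⊤ : ℕ∞) f) : ContDiff ℝ (⊤ : ℕ∞) (Lap f) :=
  ((pd_contDiff (pd_contDiff hf 1) 1).add (pd_contDiff (pd_contDiff hf 2) 2)).add
    (pd_contDiff (pd_contDiff hf 3) 3)

lemma pd_Lap {f : (Fin 4 → ℝ) → ℂ} (hf : ContDiff ℝ (⊤ : ℕ∞) f) (i : Fin 4) (x : Fin 4 → ℝ) :
    pd i (Lap f) x = pd i (pd 1 (pd 1 f)) x + pd i (pd 2 (pd 2 f)) x + pd i (pd 3 (pd 3 f)) x := by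
  have h1 : ContDiff ℝ (⊤ : ℕ∞) (fun y => pd 1 (pd 1 f) y + pd 2 (pd 2 f) y) :=
    (pd_contDiff (pd_contDiff hf 1) 1).add (pd_contDiff (pd_contDiff hf 2) 2)
  show pd i (fun y => (pd 1 (pd 1 f) y + pd 2 (pd 2 f) y) + pd 3 (pd 3 f) y) x = _
  rw [pd_add (h1.differentiable (by simp)).differentiableAt
    ((pd_contDiff (pd_contDiff hf 3) 3).differentiable (by simp)).differentiableAt,
    pd_add ((pd_contDiff (pd_contDiff hf 1) 1).differentiable (by simp)).differentiableAt
    ((pd_contDiff (pd_contDiff hf 2) 2).differentiable (by simp)).differentiableAt]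

lemma pd_pd_coord_mul {g : (Fin 4 → ℝ) → ℂ} (hg : ContDiff ℝ (⊤ : ℕ∞) g) (J l : Fin 4) (x : Fin 4 → ℝ) :
    pd l (pd l (fun y => ((y J : ℝ) : ℂ) * g y)) x
      = 2 * (if J = l then 1 else 0) * pd l g x + ((x J : ℝ) : ℂ) * pd l (pd l g) x := by
  rw [pd_coord_mul' hg J l]
  have hu : DifferentiableAt ℝ (fun y => (if J = l then (1:ℂ) else 0) * g y) x :=
    ((contDiff_const.mul hg).differentiable (by simp)).differentiableAt
  have hv : DifferentiableAt ℝ (fun y => ((y J : ℝ) : ℂ) * pd l g y) x :=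
    ((coord_mul_contDiff (pd_contDiff hg l) J).differentiable (by simp)).differentiableAt
  rw [pd_add hu hv, pd_const_mul ((hg.differentiable (by simp)).differentiableAt),
    pd_coord_mul (((pd_contDiff hg l).differentiable (by simp)).differentiableAt)]
  ring

lemma delta_sum (J : Fin 4) (hJ : J ≠ 0) (h : Fin 4 → ℂ) :
    (if J = 1 then (1:ℂ) else 0) * h 1 + (if J = 2 then (1:ℂ) else 0) * h 2
      + (if J = 3 then (1:ℂ) else 0) * h 3 = h J := by
  fin_cases J <;> simp_all

lemma Lap_coord_mul {g : (Fin 4 → ℝ) → ℂ} (hg : ContDiff ℝ (⊤ : ℕ∞) g) {J : Fin 4} (hJ : J ≠ 0)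
    (x : Fin 4 → ℝ) :
    Lap (fun y => ((y J : ℝ) : ℂ) * g y) x = 2 * pd J g x + ((x J : ℝ) : ℂ) * Lap g x := by
  simp only [Lap]
  rw [pd_pd_coord_mul hg J 1, pd_pd_coord_mul hg J 2, pd_pd_coord_mul hg J 3]
  linear_combination (2:ℂ) * delta_sum J hJ (fun l => pd l g x)

lemma Lap_time_mul {g : (Fin 4 → ℝ) → ℂ} (hg : ContDiff ℝ (⊤ : ℕ∞) g) (x : Fin 4 → ℝ) :
    Lap (fun y => ((y 0 : ℝ) : ℂ) * g y) x = ((x 0 : ℝ) : ℂ) * Lap g x := by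
  simp only [Lap]
  rw [pd_pd_coord_mul hg 0 1, pd_pd_coord_mul hg 0 2, pd_pd_coord_mul hg 0 3]
  rw [if_neg (by decide : ¬ ((0:Fin 4) = 1)), if_neg (by decide : ¬ ((0:Fin 4) = 2)),
    if_neg (by decide : ¬ ((0:Fin 4) = 3))]
  ring

/-- The rotation generator `A = x_j ∂_k − x_k ∂_j`. -/
noncomputable def Aop (j k : Fin 3) (f : (Fin 4 → ℝ) → ℂ) : (Fin 4 → ℝ) → ℂ :=
  fun x => ((x j.succ : ℝ) : ℂ) * pd k.succ f x - ((x k.succ : ℝ) : ℂ) * pd j.succ f x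

lemma Ls_eq (hbar m : ℝ) (f : (Fin 4 → ℝ) → ℂ) (x : Fin 4 → ℝ) :
    Ls hbar m f x = Complex.I * (hbar : ℂ) * pd 0 f x
      + ((hbar ^ 2 / (2 * m) : ℝ) : ℂ) * Lap f x := rfl

lemma Aop_contDiff {f : (Fin 4 → ℝ) → ℂ} (hf : ContDiff ℝ (⊤ : ℕ∞) f) (j k : Fin 3) :
    ContDiff ℝ (⊤ : ℕ∞) (Aop j k f) :=
  (coord_mul_contDiff (pd_contDiff hf k.succ) j.succ).sub
    (coord_mul_contDiff (pd_contDiff hf j.succ) k.succ)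

lemma Ls_contDiff (hbar m : ℝ) {f : (Fin 4 → ℝ) → ℂ} (hf : ContDiff ℝ (⊤ : ℕ∞) f) :
    ContDiff ℝ (⊤ : ℕ∞) (Ls hbar m f) := by
  unfold Ls
  exact (contDiff_const.mul (pd_contDiff hf 0)).add (contDiff_const.mul
    (((pd_contDiff (pd_contDiff hf 1) 1).add (pd_contDiff (pd_contDiff hf 2) 2)).add
      (pd_contDiff (pd_contDiff hf 3) 3)))

lemma Qjk_contDiff {f : (Fin 4 → ℝ) → ℂ} (hf : ContDiff ℝ (⊤ : ℕ∞) f) (j k : Fin 3) :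
    ContDiff ℝ (⊤ : ℕ∞) (Qjk j k f) :=
  coord_mul_contDiff (Aop_contDiff hf j k) 0

lemma Aop_eq (j k : Fin 3) (f : (Fin 4 → ℝ) → ℂ) :
    Aop j k f = fun y => ((y j.succ : ℝ) : ℂ) * pd k.succ f y
      - ((y k.succ : ℝ) : ℂ) * pd j.succ f y := rfl

lemma Qjk_eq_Aop (j k : Fin 3) (f : (Fin 4 → ℝ) → ℂ) :
    Qjk j k f = fun y => ((y 0 : ℝ) : ℂ) * Aop j k f y := rfl

lemma Lap_sub {u v : (Fin 4 → ℝ) → ℂ} (hu : ContDiff ℝ (⊤ : ℕ∞) u) (hv : ContDiff ℝ (⊤ : ℕ∞) v)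
    (x : Fin 4 → ℝ) :
    Lap (fun y => u y - v y) x = Lap u x - Lap v x := by
  simp only [Lap]
  rw [pd_sub' hu hv 1, pd_sub' hu hv 2, pd_sub' hu hv 3,
    pd_sub (((pd_contDiff hu 1).differentiable (by simp)).differentiableAt)
      (((pd_contDiff hv 1).differentiable (by simp)).differentiableAt),
    pd_sub (((pd_contDiff hu 2).differentiable (by simp)).differentiableAt)
      (((pd_contDiff hv 2).differentiable (by simp)).differentiableAt),
    pd_sub (((pd_contDiff hu 3).differentiable (by simp)).differentiableAt)
      (((pd_contDiff hv 3).differentiable (by simp)).differentiableAt)]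
  ring

lemma Lap_add {u v : (Fin 4 → ℝ) → ℂ} (hu : ContDiff ℝ (⊤ : ℕ∞) u) (hv : ContDiff ℝ (⊤ : ℕ∞) v)
    (x : Fin 4 → ℝ) :
    Lap (fun y => u y + v y) x = Lap u x + Lap v x := by
  simp only [Lap]
  rw [pd_add' hu hv 1, pd_add' hu hv 2, pd_add' hu hv 3,
    pd_add (((pd_contDiff hu 1).differentiable (by simp)).differentiableAt)
      (((pd_contDiff hv 1).differentiable (by simp)).differentiableAt),
    pd_add (((pd_contDiff hu 2).differentiable (by simp)).differentiableAt)
      (((pd_contDiff hv 2).differentiable (by simp)).differentiableAt),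
    pd_add (((pd_contDiff hu 3).differentiable (by simp)).differentiableAt)
      (((pd_contDiff hv 3).differentiable (by simp)).differentiableAt)]
  ring

lemma Lap_const_mul {u : (Fin 4 → ℝ) → ℂ} (hu : ContDiff ℝ (⊤ : ℕ∞) u) (c : ℂ) (x : Fin 4 → ℝ) :
    Lap (fun y => c * u y) x = c * Lap u x := by
  simp only [Lap]
  rw [pd_const_mul' hu c 1, pd_const_mul' hu c 2, pd_const_mul' hu c 3,
    pd_const_mul (((pd_contDiff hu 1).differentiable (by simp)).differentiableAt),
    pd_const_mul (((pd_contDiff hu 2).differentiable (by simp)).differentiableAt),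
    pd_const_mul (((pd_contDiff hu 3).differentiable (by simp)).differentiableAt)]
  ring

lemma Lap_pd {f : (Fin 4 → ℝ) → ℂ} (hf : ContDiff ℝ (⊤ : ℕ∞) f) (K : Fin 4) (x : Fin 4 → ℝ) :
    Lap (pd K f) x = pd K (Lap f) x := by
  simp only [Lap]
  rw [pd_comm' hf 1 K, pd_comm' hf 2 K, pd_comm' hf 3 K,
    pd_comm (pd_contDiff hf 1) 1 K x, pd_comm (pd_contDiff hf 2) 2 K x,
    pd_comm (pd_contDiff hf 3) 3 K x, pd_Lap hf K x]

lemma Ls_pd (hbar m : ℝ) {f : (Fin 4 → ℝ) → ℂ} (hf : ContDiff ℝ (⊤ : ℕ∞) f) (K : Fin 4)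
    (x : Fin 4 → ℝ) :
    Ls hbar m (pd K f) x = pd K (Ls hbar m f) x := by
  have hrhs : pd K (Ls hbar m f) x
      = Complex.I * (hbar : ℂ) * pd K (pd 0 f) x
        + ((hbar ^ 2 / (2 * m) : ℝ) : ℂ) * pd K (Lap f) x := by
    have : Ls hbar m f = fun y => Complex.I * (hbar : ℂ) * pd 0 f y
        + ((hbar ^ 2 / (2 * m) : ℝ) : ℂ) * Lap f y := rfl
    rw [this, pd_add (((contDiff_const.mul (pd_contDiff hf 0)).differentiable (by simp)).differentiableAt)
        (((contDiff_const.mul (Lap_contDiff hf)).differentiable (by simp)).differentiableAt),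
      pd_const_mul (((pd_contDiff hf 0).differentiable (by simp)).differentiableAt),
      pd_const_mul (((Lap_contDiff hf).differentiable (by simp)).differentiableAt)]
  rw [Ls_eq, hrhs, Lap_pd hf K x, pd_comm hf 0 K x]

lemma Ls_Aop (hbar m : ℝ) (j k : Fin 3) {f : (Fin 4 → ℝ) → ℂ} (hf : ContDiff ℝ (⊤ : ℕ∞) f)
    (x : Fin 4 → ℝ) :
    Ls hbar m (Aop j k f) x = Aop j k (Ls hbar m f) x := by
  have hJ : j.succ ≠ 0 := Fin.succ_ne_zero j
  have hK : k.succ ≠ 0 := Fin.succ_ne_zero k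
  have hu : ContDiff ℝ (⊤ : ℕ∞) (fun y => ((y j.succ : ℝ) : ℂ) * pd k.succ f y) :=
    coord_mul_contDiff (pd_contDiff hf k.succ) j.succ
  have hv : ContDiff ℝ (⊤ : ℕ∞) (fun y => ((y k.succ : ℝ) : ℂ) * pd j.succ f y) :=
    coord_mul_contDiff (pd_contDiff hf j.succ) k.succ
  rw [Aop_eq, Aop_eq, Ls_eq,
    pd_sub ((hu.differentiable (by simp)).differentiableAt)
      ((hv.differentiable (by simp)).differentiableAt) 0,
    Lap_sub hu hv x,
    pd_coord_mul (((pd_contDiff hf k.succ).differentiable (by simp)).differentiableAt) j.succ 0,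
    pd_coord_mul (((pd_contDiff hf j.succ).differentiable (by simp)).differentiableAt) k.succ 0,
    if_neg hJ, if_neg hK,
    Lap_coord_mul (pd_contDiff hf k.succ) hJ x,
    Lap_coord_mul (pd_contDiff hf j.succ) hK x]
  beta_reduce
  rw [← Ls_pd hbar m hf k.succ x, ← Ls_pd hbar m hf j.succ x, Ls_eq, Ls_eq]
  linear_combination (((hbar ^ 2 / (2 * m) : ℝ) : ℂ) * 2) * pd_comm hf j.succ k.succ x

lemma Ls_Qjk (hbar m : ℝ) (j k : Fin 3) {f : (Fin 4 → ℝ) → ℂ} (hf : ContDiff ℝ (⊤ : ℕ∞) f)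
    (x : Fin 4 → ℝ) :
    Ls hbar m (Qjk j k f) x
      = Complex.I * (hbar : ℂ) * Aop j k f x + Qjk j k (Ls hbar m f) x := by
  rw [Qjk_eq_Aop, Ls_eq,
    pd_coord_mul (((Aop_contDiff hf j k).differentiable (by simp)).differentiableAt) 0 0,
    if_pos rfl, Lap_time_mul (Aop_contDiff hf j k) x]
  have hq : Qjk j k (Ls hbar m f) x = ((x 0 : ℝ) : ℂ) * Aop j k (Ls hbar m f) x := rfl
  rw [hq, ← Ls_Aop hbar m j k hf x, Ls_eq]
  ring

lemma Ls_comb (hbar m : ℝ) (c : ℂ) {u v : (Fin 4 → ℝ) → ℂ} (hu : ContDiff ℝ (⊤ : ℕ∞) u)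
    (hv : ContDiff ℝ (⊤ : ℕ∞) v) (x : Fin 4 → ℝ) :
    Ls hbar m (fun y => c * u y + v y) x = c * Ls hbar m u x + Ls hbar m v x := by
  rw [Ls_eq,
    pd_add (((contDiff_const.mul hu).differentiable (by simp)).differentiableAt)
      ((hv.differentiable (by simp)).differentiableAt) 0,
    pd_const_mul ((hu.differentiable (by simp)).differentiableAt) c 0,
    Lap_add (contDiff_const.mul hu) hv x, Lap_const_mul hu c x, Ls_eq, Ls_eq]
  ring


/-- the second-order commutator of the free Schrödinger operator
with `Q_{jk} = t(x_j∂_k − x_k∂_j)`, `j ≠ k`, vanishes identically. -/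
theorem stmt_13 (hbar m : ℝ) (hhbar : 0 < hbar) (hm : 0 < m)
    (j k : Fin 3) (hjk : j ≠ k)
    (φ : (Fin 4 → ℝ) → ℂ) (hφ : ContDiff ℝ (⊤ : ℕ∞) φ) :
    ∀ x : Fin 4 → ℝ,
      Ls hbar m (Ls hbar m (Qjk j k φ)) x
        - 2 * Ls hbar m (Qjk j k (Ls hbar m φ)) x
        + Qjk j k (Ls hbar m (Ls hbar m φ)) x = 0 := by
  intro x
  have hg : ContDiff ℝ (⊤ : ℕ∞) (Ls hbar m φ) := Ls_contDiff hbar m hφ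
  have e2 : Ls hbar m (Qjk j k φ)
      = fun y => Complex.I * (hbar : ℂ) * Aop j k φ y + Qjk j k (Ls hbar m φ) y :=
    funext (Ls_Qjk hbar m j k hφ)
  rw [e2, Ls_comb hbar m _ (Aop_contDiff hφ j k) (Qjk_contDiff hg j k) x,
    Ls_Aop hbar m j k hφ x, Ls_Qjk hbar m j k hg x]
  ring
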